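/- Let f : ℂ → ℂ belong to OM₊, not identically zero on the slit plane, let S(w) = Log f(e^w) − w/2 for w ∈ D, and let c > 1 be real. Then f(c²·x) = c·f(x) for all real x > 0 if and only if S(w + 2·log c) = S(w) for all w ∈ D; and in that case the limit of f(x) as real x → 0⁺ equals 0. -/

import Mathlib

open Complex MeasureTheory Filter

noncomputable section

/-- The open horizontal strip `D = {w : ℂ | -π < Im w < π}`. -/
def strip : Set ℂ := {w : ℂ | -Real.pi < w.im ∧ w.im < Real.pi}

/-- The class `OM₊`: functions analytic on the slit plane `ℂ \ (-∞,0]`,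
nonnegative real on the positive real axis, with nonnegative imaginary part
on the upper half-plane. -/
def OMplus (f : ℂ → ℂ) : Prop :=
  DifferentiableOn ℂ f Complex.slitPlane ∧
  (∀ x : ℝ, 0 < x → ∃ t : ℝ, 0 ≤ t ∧ f (x : ℂ) = (t : ℂ)) ∧
  (∀ z : ℂ, 0 < z.im → 0 ≤ (f z).im)

lemma slit_preconn : IsPreconnected Complex.slitPlane := by
  have hA : Convex ℝ {z : ℂ | 0 < z.im} := convex_halfSpace_im_gt 0
  have hB : Convex ℝ {z : ℂ | 0 < z.re} := convex_halfSpace_re_gt 0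
  have hC : Convex ℝ {z : ℂ | z.im < 0} := convex_halfSpace_im_lt 0
  have hAB : IsPreconnected ({z : ℂ | 0 < z.im} ∪ {z : ℂ | 0 < z.re}) :=
    IsPreconnected.union (1 + Complex.I) (by simp) (by simp) hA.isPreconnected hB.isPreconnected
  have hABC : IsPreconnected (({z : ℂ | 0 < z.im} ∪ {z : ℂ | 0 < z.re}) ∪ {z : ℂ | z.im < 0}) :=
    IsPreconnected.union (1 - Complex.I) (Or.inr (by simp)) (by simp) hAB hC.isPreconnected
  convert hABC using 1
  ext z
  simp only [Complex.mem_slitPlane_iff, Set.mem_union, Set.mem_setOf_eq, ne_iff_lt_or_gt]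
  tauto

lemma exp_strip_mem {w : ℂ} (hw1 : -Real.pi < w.im) (hw2 : w.im < Real.pi) :
    Complex.exp w ∈ Complex.slitPlane := by
  rcases lt_trichotomy w.im 0 with h | h | h
  · refine Or.inr ?_
    rw [Complex.exp_im]
    exact mul_ne_zero (Real.exp_pos _).ne' (Real.sin_neg_of_neg_of_neg_pi_lt h hw1).ne
  · refine Or.inl ?_
    rw [Complex.exp_re, h]
    simpa using (Real.exp_pos _)
  · refine Or.inr ?_
    rw [Complex.exp_im]
    exact mul_ne_zero (Real.exp_pos _).ne' (Real.sin_pos_of_pos_of_lt_pi h hw2).ne'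

lemma hasDerivAt_conj_conj {f : ℂ → ℂ} {f' : ℂ} {z : ℂ}
    (hf : HasDerivAt f f' ((starRingEnd ℂ) z)) :
    HasDerivAt (fun w => (starRingEnd ℂ) (f ((starRingEnd ℂ) w))) ((starRingEnd ℂ) f') z := by
  rw [hasDerivAt_iff_tendsto_slope] at hf ⊢
  have hconj : Filter.Tendsto (starRingEnd ℂ) (nhdsWithin z {z}ᶜ)
      (nhdsWithin ((starRingEnd ℂ) z) {((starRingEnd ℂ) z)}ᶜ) := by
    rw [tendsto_nhdsWithin_iff]
    refine ⟨(Complex.continuous_conj.tendsto z).mono_left nhdsWithin_le_nhds, ?_⟩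
    filter_upwards [self_mem_nhdsWithin] with w hw
    exact fun h => hw ((starRingEnd ℂ).injective h)
  have h2 := (Complex.continuous_conj.tendsto f').comp (hf.comp hconj)
  refine h2.congr fun w => ?_
  simp [Function.comp, slope_def_field, map_div₀, map_sub]

lemma conj_mem_slit {z : ℂ} (hz : z ∈ Complex.slitPlane) :
    (starRingEnd ℂ) z ∈ Complex.slitPlane := by
  rcases hz with h | h
  · exact Or.inl (by simpa using h)
  · exact Or.inr (by simpa using h)

/-- frequently equal near 1 for functions agreeing on positive reals -/
lemma freq_of_real {f g : ℂ → ℂ} (h : ∀ x : ℝ, 0 < x → f (x : ℂ) = g (x : ℂ)) :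
    ∃ᶠ z in nhdsWithin 1 {(1 : ℂ)}ᶜ, f z = g z := by
  rw [Filter.frequently_iff]
  intro U hU
  rw [Metric.mem_nhdsWithin_iff] at hU
  obtain ⟨ε, hε, hsub⟩ := hU
  refine ⟨((1 + ε / 2 : ℝ) : ℂ), hsub ⟨?_, ?_⟩, h _ (by linarith)⟩
  · rw [Metric.mem_ball]
    have : ((1 + ε / 2 : ℝ) : ℂ) - 1 = ((ε / 2 : ℝ) : ℂ) := by push_cast; ring
    rw [Complex.dist_eq, this, Complex.norm_real, Real.norm_eq_abs, abs_of_pos (by linarith : (0:ℝ) < ε / 2)]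
    linarith
  · simp only [Set.mem_compl_iff, Set.mem_singleton_iff]
    intro hcon
    have : (1 + ε / 2 : ℝ) = 1 := by exact_mod_cast hcon
    linarith

lemma OMplus.nonvanishing {f : ℂ → ℂ} (hf : OMplus f)
    (hne : ∃ z ∈ Complex.slitPlane, f z ≠ 0) :
    ∀ z ∈ Complex.slitPlane, f z ≠ 0 := by
  obtain ⟨hdiff, hreal, him⟩ := hf
  have han : AnalyticOnNhd ℂ f Complex.slitPlane :=
    hdiff.analyticOnNhd isOpen_slitPlane
  -- reflection principle
  set g : ℂ → ℂ := fun z => (starRingEnd ℂ) (f ((starRingEnd ℂ) z)) with hg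
  have hgdiff : DifferentiableOn ℂ g Complex.slitPlane := by
    intro z hz
    have hconjz := conj_mem_slit hz
    have hd := (hdiff _ hconjz).differentiableAt (isOpen_slitPlane.mem_nhds hconjz)
    exact (hasDerivAt_conj_conj hd.hasDerivAt).differentiableAt.differentiableWithinAt
  have hgan : AnalyticOnNhd ℂ g Complex.slitPlane :=
    hgdiff.analyticOnNhd isOpen_slitPlane
  have heq : Set.EqOn g f Complex.slitPlane := by
    refine hgan.eqOn_of_preconnected_of_frequently_eq han slit_preconn
      Complex.one_mem_slitPlane (freq_of_real fun x hx => ?_)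
    obtain ⟨t, _, ht⟩ := hreal x hx
    simp [hg, Complex.conj_ofReal, ht]
  have hrefl : ∀ z ∈ Complex.slitPlane, f ((starRingEnd ℂ) z) = (starRingEnd ℂ) (f z) := by
    intro z hz
    have := heq hz
    simp only [hg] at this
    rw [← this, Complex.conj_conj]
  rcases han.is_constant_or_isOpen slit_preconn with ⟨v, hv⟩ | hopen
  · obtain ⟨z0, hz0, hz0ne⟩ := hne
    intro z hz
    rw [hv z hz, ← hv z0 hz0]
    exact hz0ne
  · -- strict positivity of Im f on the upper half plane
    have hU : ∀ z : ℂ, 0 < z.im → 0 < (f z).im := by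
      by_contra hcon
      push_neg at hcon
      obtain ⟨z0, hz0, hz0im⟩ := hcon
      have hz0im' : (f z0).im = 0 := le_antisymm hz0im (him z0 hz0)
      have hs : IsOpen {z : ℂ | 0 < z.im} := isOpen_lt continuous_const Complex.continuous_im
      have hsub : {z : ℂ | 0 < z.im} ⊆ Complex.slitPlane := fun z hz => Or.inr (ne_of_gt hz)
      have himg : IsOpen (f '' {z : ℂ | 0 < z.im}) := hopen _ hsub hs
      obtain ⟨ε, hε, hball⟩ := Metric.isOpen_iff.1 himg (f z0) ⟨z0, hz0, rfl⟩
      have hmem : f z0 - ((ε / 2 : ℝ) : ℂ) * Complex.I ∈ Metric.ball (f z0) ε := by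
        rw [Metric.mem_ball, Complex.dist_eq]
        have h4 : f z0 - ((ε / 2 : ℝ) : ℂ) * Complex.I - f z0 = -(((ε / 2 : ℝ) : ℂ) * Complex.I) := by
          ring
        rw [h4]
        have h5 : ‖(-(((ε / 2 : ℝ) : ℂ) * Complex.I))‖ = ε / 2 := by
          simp [abs_of_pos (by linarith : (0:ℝ) < ε / 2), abs_of_pos hε]
        rw [h5]
        linarith
      obtain ⟨z1, hz1, hfz1⟩ := hball hmem
      have h6 : (f z1).im = -(ε / 2) := by
        rw [hfz1]
        simp [Complex.sub_im, Complex.mul_im, hz0im']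
      linarith [him z1 hz1]
    -- no negative real values
    have hnoneg : ∀ z ∈ Complex.slitPlane, ∀ r : ℝ, r < 0 → f z ≠ (r : ℂ) := by
      intro z hz r hr hfz
      rcases lt_trichotomy z.im 0 with h | h | h
      · have hcz : 0 < ((starRingEnd ℂ) z).im := by simpa using h
        have := hU _ hcz
        rw [hrefl z hz, hfz] at this
        simp [Complex.conj_ofReal] at this
      · have hzre : 0 < z.re := by
          rcases hz with h' | h'
          · exact h'
          · exact absurd h h'
        have hz' : z = ((z.re : ℝ) : ℂ) := Complex.ext (by simp) (by simp [h])
        obtain ⟨t, ht0, ht⟩ := hreal z.re hzre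
        rw [hz', ht] at hfz
        have : t = r := by exact_mod_cast hfz
        linarith
      · have := hU z h
        rw [hfz] at this
        simp at this
    intro z hz hfz
    have himg : IsOpen (f '' Complex.slitPlane) := hopen _ le_rfl isOpen_slitPlane
    obtain ⟨ε, hε, hball⟩ := Metric.isOpen_iff.1 himg 0 ⟨z, hz, hfz⟩
    have hmem : ((-(ε / 2) : ℝ) : ℂ) ∈ Metric.ball (0 : ℂ) ε := by
      rw [Metric.mem_ball, Complex.dist_eq, sub_zero, Complex.norm_real, Real.norm_eq_abs,
        abs_of_neg (by linarith : (-(ε / 2) : ℝ) < 0)]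
      linarith
    obtain ⟨z1, hz1, hfz1⟩ := hball hmem
    exact hnoneg z1 hz1 (-(ε / 2)) (by linarith) hfz1
/-- For `f ∈ OM₊` not identically zero, with `S(w) = Log f(e^w) - w/2` on `D`,
and `c > 1`: `f(c²x) = c·f(x)` for all `x > 0` iff `S(w + 2 log c) = S(w)` on `D`;
and in that case `f(x) → 0` as `x → 0⁺`. -/
theorem stmt_5 (f : ℂ → ℂ) (hf : OMplus f)
    (hne : ∃ z ∈ Complex.slitPlane, f z ≠ 0)
    (S : ℂ → ℂ) (hS : ∀ w ∈ strip, S w = Complex.log (f (Complex.exp w)) - w / 2)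
    (c : ℝ) (hc : 1 < c) :
    ((∀ x : ℝ, 0 < x → f ((c ^ 2 * x : ℝ) : ℂ) = (c : ℂ) * f (x : ℂ)) ↔
      (∀ w ∈ strip, S (w + (2 * Real.log c : ℝ)) = S w)) ∧
    ((∀ x : ℝ, 0 < x → f ((c ^ 2 * x : ℝ) : ℂ) = (c : ℂ) * f (x : ℂ)) →
      Filter.Tendsto (fun x : ℝ => f (x : ℂ)) (nhdsWithin 0 (Set.Ioi 0)) (nhds 0)) := by
  have nz : ∀ z ∈ Complex.slitPlane, f z ≠ 0 := OMplus.nonvanishing hf hne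
  have hc0 : (0:ℝ) < c := lt_trans one_pos hc
  have hL : 0 < Real.log c := Real.log_pos hc
  set L := Real.log c with hLdef
  have hexpc : Real.exp (2 * L) = c ^ 2 := by
    rw [show (2:ℝ) * L = Real.log (c ^ 2) by rw [Real.log_pow]; push_cast; ring,
      Real.exp_log (by positivity)]
  have hscale : Set.MapsTo (fun z => ((c:ℂ)^2) * z) Complex.slitPlane Complex.slitPlane := by
    intro z hz
    have hcast : ((c:ℂ)^2) = ((c^2 : ℝ) : ℂ) := by push_cast; ring
    rcases hz with h | h
    · refine Or.inl ?_
      rw [hcast, Complex.re_ofReal_mul]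
      positivity
    · refine Or.inr ?_
      rw [hcast, Complex.im_ofReal_mul]
      exact mul_ne_zero (by positivity) h
  have hext : (∀ x : ℝ, 0 < x → f ((c ^ 2 * x : ℝ) : ℂ) = (c : ℂ) * f (x : ℂ)) →
      ∀ z ∈ Complex.slitPlane, f (((c:ℂ)^2) * z) = (c:ℂ) * f z := by
    intro hx
    have h1 : DifferentiableOn ℂ (fun z => f (((c:ℂ)^2) * z)) Complex.slitPlane :=
      hf.1.comp ((differentiable_id.const_mul _).differentiableOn) hscale
    have hF : DifferentiableOn ℂ (fun z => f (((c:ℂ)^2) * z) - (c:ℂ) * f z)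
        Complex.slitPlane := h1.sub ((differentiableOn_const ((c:ℂ))).mul hf.1)
    have hzero : Set.EqOn (fun z => f (((c:ℂ)^2) * z) - (c:ℂ) * f z) 0 Complex.slitPlane := by
      refine (hF.analyticOnNhd isOpen_slitPlane).eqOn_zero_of_preconnected_of_frequently_eq_zero
        slit_preconn Complex.one_mem_slitPlane ?_
      have hfreq := freq_of_real (f := fun z => f (((c:ℂ)^2) * z) - (c:ℂ) * f z)
        (g := fun _ => (0:ℂ)) ?_
      · exact hfreq
      · intro x hx0
        have h := hx x hx0
        push_cast at h
        simp only [sub_eq_zero]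
        exact h
    intro z hz
    have := hzero hz
    simpa [sub_eq_zero] using this
  constructor
  · constructor
    · intro hx w hw
      obtain ⟨hw1, hw2⟩ := hw
      have hw' : w + ((2 * L : ℝ) : ℂ) ∈ strip := by
        refine ⟨?_, ?_⟩ <;> simp [Complex.add_im, Complex.ofReal_im] <;> assumption
      rw [hS _ hw', hS _ ⟨hw1, hw2⟩]
      have hexpw : Complex.exp (w + ((2 * L : ℝ) : ℂ)) = ((c:ℂ)^2) * Complex.exp w := by
        rw [Complex.exp_add, ← Complex.ofReal_exp, hexpc]
        push_cast
        ring
      have hmem := exp_strip_mem hw1 hw2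
      rw [hexpw, hext hx _ hmem, Complex.log_ofReal_mul hc0 (nz _ hmem)]
      rw [hLdef]
      push_cast
      ring
    · intro hSp x hx0
      have hpi := Real.pi_pos
      have hwmem : ((Real.log x : ℝ) : ℂ) ∈ strip := by
        refine ⟨?_, ?_⟩ <;> simp [Complex.ofReal_im] <;> linarith
      have hwmem' : ((Real.log x : ℝ) : ℂ) + ((2 * L : ℝ) : ℂ) ∈ strip := by
        refine ⟨?_, ?_⟩ <;> simp [Complex.add_im, Complex.ofReal_im] <;> linarith
      have h := hSp _ hwmem
      rw [hS _ hwmem', hS _ hwmem] at h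
      have hexp1 : Complex.exp ((Real.log x : ℝ) : ℂ) = (x : ℂ) := by
        rw [← Complex.ofReal_exp, Real.exp_log hx0]
      have hexp2 : Complex.exp (((Real.log x : ℝ) : ℂ) + ((2 * L : ℝ) : ℂ))
          = ((c ^ 2 * x : ℝ) : ℂ) := by
        rw [Complex.exp_add, hexp1, ← Complex.ofReal_exp, hexpc]
        push_cast
        ring
      rw [hexp1, hexp2] at h
      have hx2 : (0:ℝ) < c ^ 2 * x := by positivity
      have hne1 : f ((c ^ 2 * x : ℝ) : ℂ) ≠ 0 := nz _ (Complex.ofReal_mem_slitPlane.2 hx2)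
      have hne2 : f ((x : ℝ) : ℂ) ≠ 0 := nz _ (Complex.ofReal_mem_slitPlane.2 hx0)
      have hlog : Complex.log (f ((c ^ 2 * x : ℝ) : ℂ))
          = Complex.log (f (x : ℂ)) + ((L : ℝ) : ℂ) := by
        push_cast at h ⊢
        linear_combination h
      have hfin := congrArg Complex.exp hlog
      rw [Complex.exp_log hne1, Complex.exp_add, Complex.exp_log hne2, ← Complex.ofReal_exp,
        hLdef, Real.exp_log hc0] at hfin
      rw [hfin]
      ring
  · intro hx
    have hpow : ∀ (n : ℕ) (y : ℝ), 0 < y →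
        f ((c ^ (2 * n) * y : ℝ) : ℂ) = (c:ℂ) ^ n * f (y : ℂ) := by
      intro n
      induction n with
      | zero => intro y hy; simp
      | succ n ih =>
        intro y hy
        have h1 : (c ^ (2 * (n + 1)) * y : ℝ) = c ^ 2 * (c ^ (2 * n) * y) := by ring
        rw [h1, hx (c ^ (2 * n) * y) (by positivity), ih y hy]
        ring
    have hcont : ContinuousOn (fun y : ℝ => f (y : ℂ)) (Set.Icc 1 (c ^ 2)) := by
      refine hf.1.continuousOn.comp Complex.continuous_ofReal.continuousOn ?_
      intro y hy
      exact Complex.ofReal_mem_slitPlane.2 (by linarith [hy.1])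
    obtain ⟨M, hM⟩ := (isCompact_Icc).exists_bound_of_continuousOn hcont
    have hM0 : 0 ≤ M := le_trans (norm_nonneg _) (hM 1 ⟨le_refl 1, by nlinarith⟩)
    have hbound : ∀ y : ℝ, 0 < y → y < 1 → ‖f (y : ℂ)‖ ≤ M * Real.sqrt y := by
      intro y hy0 hy1
      have hty : Real.log y < 0 := Real.log_neg hy0 hy1
      set t : ℝ := -Real.log y with htdef
      have ht0 : 0 < t := by rw [htdef]; linarith
      set m : ℕ := ⌈t / (2 * L)⌉₊ with hmdef
      have hm1 : t ≤ 2 * m * L := by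
        have h := Nat.le_ceil (t / (2 * L))
        rw [div_le_iff₀ (by linarith)] at h
        calc t ≤ (m : ℝ) * (2 * L) := h
        _ = 2 * m * L := by ring
      have hm2 : 2 * (m : ℝ) * L ≤ t + 2 * L := by
        have h := (Nat.ceil_lt_add_one (by positivity : (0:ℝ) ≤ t / (2 * L))).le
        rw [← hmdef] at h
        have h2 : (m : ℝ) * (2 * L) ≤ (t / (2 * L) + 1) * (2 * L) :=
          mul_le_mul_of_nonneg_right h (by linarith)
        have h3 : (t / (2 * L) + 1) * (2 * L) = t + 2 * L := by
          field_simp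
        nlinarith
      have hcm : (0:ℝ) < c ^ m := by positivity
      have hckey : (c:ℝ) ^ (2 * m) = Real.exp (2 * m * L) := by
        rw [← Real.exp_log (by positivity : (0:ℝ) < c ^ (2 * m)), Real.log_pow]
        push_cast
        try ring_nf
        rw [hLdef]
      have hyexp : y = Real.exp (-t) := by
        rw [htdef, neg_neg, Real.exp_log hy0]
      have hprod : c ^ (2 * m) * y = Real.exp (2 * m * L - t) := by
        rw [hckey, hyexp, ← Real.exp_add]
        congr 1
        try ring
      have h1le : 1 ≤ c ^ (2 * m) * y := by
        rw [hprod]; exact Real.one_le_exp (by linarith)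
      have hle2 : c ^ (2 * m) * y ≤ c ^ 2 := by
        rw [hprod, ← hexpc]; exact Real.exp_le_exp.mpr (by linarith)
      have hfy := hM _ ⟨h1le, hle2⟩
      have hnorm : ‖f ((c ^ (2 * m) * y : ℝ) : ℂ)‖ = c ^ m * ‖f (y : ℂ)‖ := by
        rw [hpow m y hy0]
        simp [norm_mul, norm_pow, Complex.norm_real, abs_of_pos hc0]
      have hsq : 1 ≤ Real.sqrt y * c ^ m := by
        have h7 : (1:ℝ) ^ 2 ≤ y * (c ^ m) ^ 2 := by
          have hcc : (c ^ m : ℝ) ^ 2 = c ^ (2 * m) := by rw [← pow_mul]; ring_nf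
          rw [hcc]
          nlinarith
        have h8 : Real.sqrt y * c ^ m = Real.sqrt (y * (c ^ m) ^ 2) := by
          rw [Real.sqrt_mul (le_of_lt hy0), Real.sqrt_sq (le_of_lt hcm)]
        rw [h8]
        exact Real.le_sqrt_of_sq_le h7
      have h9 : c ^ m * ‖f (y : ℂ)‖ ≤ M := by rw [← hnorm]; exact hfy
      nlinarith [Real.sqrt_nonneg y, norm_nonneg (f (y : ℂ)),
        mul_le_mul_of_nonneg_left h9 (Real.sqrt_nonneg y),
        mul_le_mul_of_nonneg_left hsq (norm_nonneg (f (y : ℂ)))]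
    have hsqt : Filter.Tendsto (fun y : ℝ => M * Real.sqrt y)
        (nhdsWithin 0 (Set.Ioi 0)) (nhds 0) := by
      have h1 : Filter.Tendsto (fun y : ℝ => M * Real.sqrt y) (nhds 0)
          (nhds (M * Real.sqrt 0)) := (Real.continuous_sqrt.tendsto 0).const_mul M
      simpa using h1.mono_left nhdsWithin_le_nhds
    refine squeeze_zero_norm' ?_ hsqt
    filter_upwards [Ioo_mem_nhdsGT_of_mem (Set.left_mem_Ico.mpr one_pos)] with y hy
    exact hbound y hy.1 hy.2
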